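/- Let f : V → W be a map of chain complexes equipped with filtrations F^p compatible with f (f(F^p V) ⊆ F^p W), where both filtrations are bounded above and complete. If the induced map gr f : gr V → gr W on associated graded complexes is a quasi-isomorphism, then f is a quasi-isomorphism. -/

import Mathlib

/-!
The mapping cone `C` of `f`, with `C_n = V_{n-1} × W_n` and differential
`(a, b) ↦ (-d a, f a + d b)`, is acyclic exactly when `f` is a quasi-isomorphism, and it is
filtered by `F^p V × F^p W`. Because `gr f` is a quasi-isomorphism, `gr C` is acyclic: a cycle
of `C` lying in `F^p` is a boundary of an element of `F^p` modulo `F^{p+1}`. Starting from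
`F^{p₀} = C` (boundedness), successive corrections give a Cauchy sequence of primitives; its
limit (completeness) is a primitive, since the error lies in every `F^p` (Hausdorff).
-/

section Filtration

variable {R M N : Type*} [Ring R] [AddCommGroup M] [Module R M] [AddCommGroup N] [Module R N]

def SeqComplete (F : ℤ → Submodule R M) : Prop :=
  ∀ c : ℤ → M, (∀ p, c (p + 1) - c p ∈ F p) → ∃ x, ∀ p, x - c p ∈ F p

lemma SeqComplete.exists_limit_nat {F : ℤ → Submodule R M} (hF : SeqComplete F) (p₀ : ℤ)
    (c : ℕ → M) (hc : ∀ n : ℕ, c (n + 1) - c n ∈ F (p₀ + n)) :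
    ∃ x, ∀ n : ℕ, x - c n ∈ F (p₀ + n) := by
  obtain ⟨x, hx⟩ := hF (fun p => c (p - p₀).toNat) fun p => by
    rcases le_or_gt p₀ p with hp | hp
    · have hsucc : (p + 1 - p₀).toNat = (p - p₀).toNat + 1 := by omega
      have hp' : p₀ + ((p - p₀).toNat : ℤ) = p := by omega
      simpa only [hsucc, hp'] using hc (p - p₀).toNat
    · have h₁ : (p + 1 - p₀).toNat = 0 := by omega
      have h₀ : (p - p₀).toNat = 0 := by omega
      simp [h₁, h₀]
  exact ⟨x, fun n => by simpa using hx (p₀ + n)⟩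

lemma SeqComplete.prod {F : ℤ → Submodule R M} {G : ℤ → Submodule R N}
    (hF : SeqComplete F) (hG : SeqComplete G) : SeqComplete fun p => (F p).prod (G p) := by
  intro c hc
  obtain ⟨x, hx⟩ := hF (fun p => (c p).1) fun p => (hc p).1
  obtain ⟨y, hy⟩ := hG (fun p => (c p).2) fun p => (hc p).2
  exact ⟨(x, y), fun p => ⟨hx p, hy p⟩⟩

lemma iInf_prod_eq_bot {ι : Type*} {F : ι → Submodule R M} {G : ι → Submodule R N}
    (hF : ⨅ p, F p = ⊥) (hG : ⨅ p, G p = ⊥) : ⨅ p, (F p).prod (G p) = ⊥ := by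
  rw [eq_bot_iff, ← Submodule.prod_bot, ← hF, ← hG]
  intro x hx
  simp only [Submodule.mem_iInf, Submodule.mem_prod] at hx ⊢
  exact ⟨fun p => (hx p).1, fun p => (hx p).2⟩

theorem mem_range_of_forall_exists_sub_mem (D : M →ₗ[R] N) {FM : ℤ → Submodule R M}
    {FN : ℤ → Submodule R N} (hFN : Antitone FN) (hD : ∀ p, FM p ≤ (FN p).comap D)
    (hFM : SeqComplete FM) (hsep : ⨅ p, FN p = ⊥) {Z : Submodule R N}
    (hZ : LinearMap.range D ≤ Z)
    (happrox : ∀ p, ∀ z ∈ Z, z ∈ FN p → ∃ m ∈ FM p, z - D m ∈ FN (p + 1))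
    {z : N} (hz : z ∈ Z) {p₀ : ℤ} (hp₀ : z ∈ FN p₀) : z ∈ LinearMap.range D := by
  choose! g hgF hgD using happrox
  have hZsub : ∀ m, z - D m ∈ Z := fun m => Z.sub_mem hz (hZ ⟨m, rfl⟩)
  let m : ℕ → M := fun n => Nat.rec 0 (fun n mn => mn + g (p₀ + n) (z - D mn)) n
  have hm : ∀ n : ℕ, z - D (m n) ∈ FN (p₀ + n) := by
    intro n
    induction n with
    | zero => simpa [m] using hp₀
    | succ n ih =>
      have := hgD _ _ (hZsub _) ih
      simpa [m, sub_add_eq_sub_sub, add_assoc] using this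
  obtain ⟨x, hx⟩ := hFM.exists_limit_nat p₀ m fun n => by
    simpa [m] using hgF _ _ (hZsub _) (hm n)
  have hall : ∀ p, z - D x ∈ FN p := by
    intro p
    have hp : p ≤ p₀ + ((p - p₀).toNat : ℤ) := by omega
    refine hFN hp ?_
    rw [show z - D x = (z - D (m _)) - D (x - m (p - p₀).toNat) by rw [map_sub]; abel]
    exact sub_mem (hm _) (hD _ (hx _))
  have : z - D x = 0 := by
    rw [← Submodule.mem_bot R, ← hsep]
    exact Submodule.mem_iInf _ |>.2 hall
  exact ⟨x, (sub_eq_zero.1 this).symm⟩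

end Filtration

section Cone

variable {R : Type*} [Ring R] {V W : ℤ → Type*}
  [∀ i, AddCommGroup (V i)] [∀ i, Module R (V i)] [∀ i, AddCommGroup (W i)] [∀ i, Module R (W i)]
  (dV : ∀ (i j : ℤ), j = i - 1 → (V i →ₗ[R] V j)) (dW : ∀ (i j : ℤ), j = i - 1 → (W i →ₗ[R] W j))
  (f : ∀ i, V i →ₗ[R] W i) {FV : ℤ → ∀ i, Submodule R (V i)} {FW : ℤ → ∀ i, Submodule R (W i)}

def coneDiff (i₀ i₁ i₂ : ℤ) (h₀ : i₀ = i₁ - 1) (h₁ : i₁ = i₂ - 1) :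
    V i₁ × W i₂ →ₗ[R] V i₀ × W i₁ :=
  (-(dV i₁ i₀ h₀).comp (LinearMap.fst R _ _)).prod ((f i₁).coprod (dW i₂ i₁ h₁))

variable {dV dW f}

@[simp]
lemma coneDiff_apply {i₀ i₁ i₂ : ℤ} (h₀ : i₀ = i₁ - 1) (h₁ : i₁ = i₂ - 1) (x : V i₁ × W i₂) :
    coneDiff dV dW f i₀ i₁ i₂ h₀ h₁ x = (-dV i₁ i₀ h₀ x.1, f i₁ x.1 + dW i₂ i₁ h₁ x.2) :=
  rfl

lemma coneDiff_comp_coneDiff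
    (hdV : ∀ (i j : ℤ) (h : j = i - 1) (l : ℤ) (h' : l = j - 1) (x : V i),
      dV j l h' (dV i j h x) = 0)
    (hdW : ∀ (i j : ℤ) (h : j = i - 1) (l : ℤ) (h' : l = j - 1) (x : W i),
      dW j l h' (dW i j h x) = 0)
    (hchain : ∀ (i j : ℤ) (h : j = i - 1) (x : V i), dW i j h (f i x) = f j (dV i j h x))
    {i₀ i₁ i₂ i₃ : ℤ} (h₀ : i₀ = i₁ - 1) (h₁ : i₁ = i₂ - 1) (h₂ : i₂ = i₃ - 1) :
    (coneDiff dV dW f i₀ i₁ i₂ h₀ h₁).comp (coneDiff dV dW f i₁ i₂ i₃ h₁ h₂) = 0 := by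
  ext x <;> simp [hdV, hdW, hchain]

theorem exists_sub_coneDiff_mem
    (hchain : ∀ (i j : ℤ) (h : j = i - 1) (x : V i), dW i j h (f i x) = f j (dV i j h x))
    (hcompatf : ∀ (p i : ℤ), ∀ x ∈ FV p i, f i x ∈ FW p i)
    (hgr_surj : ∀ (p i : ℤ), ∀ y ∈ FW p i,
      dW i (i - 1) rfl y ∈ FW (p + 1) (i - 1) →
      ∃ x ∈ FV p i, dV i (i - 1) rfl x ∈ FV (p + 1) (i - 1) ∧
        ∃ z ∈ FW p (i + 1),
          f i x - y - dW (i + 1) i (Int.add_sub_cancel i 1).symm z ∈ FW (p + 1) i)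
    (hgr_inj : ∀ (p i : ℤ), ∀ x ∈ FV p i,
      dV i (i - 1) rfl x ∈ FV (p + 1) (i - 1) →
      (∃ z ∈ FW p (i + 1),
        f i x - dW (i + 1) i (Int.add_sub_cancel i 1).symm z ∈ FW (p + 1) i) →
      ∃ u ∈ FV p (i + 1), x - dV (i + 1) i (Int.add_sub_cancel i 1).symm u ∈ FV (p + 1) i)
    {i₀ i₁ i₂ i₃ : ℤ} (h₀ : i₀ = i₁ - 1) (h₁ : i₁ = i₂ - 1) (h₂ : i₂ = i₃ - 1) (p : ℤ)
    {c : V i₁ × W i₂} (hc : c ∈ (FV p i₁).prod (FW p i₂))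
    (hdc : coneDiff dV dW f i₀ i₁ i₂ h₀ h₁ c ∈ (FV (p + 1) i₀).prod (FW (p + 1) i₁)) :
    ∃ m ∈ (FV p i₂).prod (FW p i₃),
      c - coneDiff dV dW f i₁ i₂ i₃ h₁ h₂ m ∈ (FV (p + 1) i₁).prod (FW (p + 1) i₂) := by
  have gr_inj : ∀ x ∈ FV p i₁, dV i₁ i₀ h₀ x ∈ FV (p + 1) i₀ →
      (∃ z ∈ FW p i₂, f i₁ x - dW i₂ i₁ h₁ z ∈ FW (p + 1) i₁) →
      ∃ u ∈ FV p i₂, x - dV i₂ i₁ h₁ u ∈ FV (p + 1) i₁ := by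
    subst h₀
    obtain rfl : i₂ = i₁ + 1 := by omega
    exact hgr_inj p i₁
  have gr_surj : ∀ y ∈ FW p i₂, dW i₂ i₁ h₁ y ∈ FW (p + 1) i₁ →
      ∃ x ∈ FV p i₂, dV i₂ i₁ h₁ x ∈ FV (p + 1) i₁ ∧
        ∃ z ∈ FW p i₃, f i₂ x - y - dW i₃ i₂ h₂ z ∈ FW (p + 1) i₂ := by
    subst h₁
    obtain rfl : i₃ = i₂ + 1 := by omega
    exact hgr_surj p i₂
  obtain ⟨ξ, η⟩ := c
  obtain ⟨hξ, hη⟩ := Submodule.mem_prod.1 hc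
  obtain ⟨hdξ, hcyc⟩ : -dV i₁ i₀ h₀ ξ ∈ FV (p + 1) i₀ ∧
      f i₁ ξ + dW i₂ i₁ h₁ η ∈ FW (p + 1) i₁ := hdc
  -- `ξ` is a `gr`-cycle with `f ξ ≡ d (-η)`, so it lifts to `u`; then `η + f u` is a `gr`-cycle.
  obtain ⟨u, hu, hξu⟩ := gr_inj ξ hξ (neg_mem_iff.1 hdξ)
    ⟨-η, neg_mem hη, by simpa using hcyc⟩
  have hdηu : dW i₂ i₁ h₁ (η + f i₂ u) ∈ FW (p + 1) i₁ := by
    rw [show dW i₂ i₁ h₁ (η + f i₂ u) = (f i₁ ξ + dW i₂ i₁ h₁ η) - f i₁ (ξ - dV i₂ i₁ h₁ u) by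
      rw [map_add, hchain, map_sub]; abel]
    exact sub_mem hcyc (hcompatf _ _ _ hξu)
  obtain ⟨x, hx, hdx, z, hz, hxz⟩ := gr_surj _ (add_mem hη (hcompatf _ _ _ hu)) hdηu
  refine ⟨(x - u, -z), ⟨sub_mem hx hu, neg_mem hz⟩, Submodule.mem_prod.2 ⟨?_, ?_⟩⟩
  · convert add_mem hξu hdx using 1
    simp only [Prod.fst_sub, coneDiff_apply, map_sub]
    abel
  · convert neg_mem hxz using 1
    simp only [Prod.snd_sub, coneDiff_apply, map_sub, map_neg]
    abel

theorem mem_range_coneDiff_of_coneDiff_eq_zero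
    (hdV : ∀ (i j : ℤ) (h : j = i - 1) (l : ℤ) (h' : l = j - 1) (x : V i),
      dV j l h' (dV i j h x) = 0)
    (hdW : ∀ (i j : ℤ) (h : j = i - 1) (l : ℤ) (h' : l = j - 1) (x : W i),
      dW j l h' (dW i j h x) = 0)
    (hchain : ∀ (i j : ℤ) (h : j = i - 1) (x : V i), dW i j h (f i x) = f j (dV i j h x))
    (hFVd : ∀ (p i j : ℤ) (h : j = i - 1), ∀ x ∈ FV p i, dV i j h x ∈ FV p j)
    (hFWd : ∀ (p i j : ℤ) (h : j = i - 1), ∀ x ∈ FW p i, dW i j h x ∈ FW p j)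
    (hcompatf : ∀ (p i : ℤ), ∀ x ∈ FV p i, f i x ∈ FW p i)
    (hgr_surj : ∀ (p i : ℤ), ∀ y ∈ FW p i,
      dW i (i - 1) rfl y ∈ FW (p + 1) (i - 1) →
      ∃ x ∈ FV p i, dV i (i - 1) rfl x ∈ FV (p + 1) (i - 1) ∧
        ∃ z ∈ FW p (i + 1),
          f i x - y - dW (i + 1) i (Int.add_sub_cancel i 1).symm z ∈ FW (p + 1) i)
    (hgr_inj : ∀ (p i : ℤ), ∀ x ∈ FV p i,
      dV i (i - 1) rfl x ∈ FV (p + 1) (i - 1) →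
      (∃ z ∈ FW p (i + 1),
        f i x - dW (i + 1) i (Int.add_sub_cancel i 1).symm z ∈ FW (p + 1) i) →
      ∃ u ∈ FV p (i + 1), x - dV (i + 1) i (Int.add_sub_cancel i 1).symm u ∈ FV (p + 1) i)
    {i₀ i₁ i₂ i₃ : ℤ} (h₀ : i₀ = i₁ - 1) (h₁ : i₁ = i₂ - 1) (h₂ : i₂ = i₃ - 1)
    (hV₁ : Antitone fun p => FV p i₁) (hW₂ : Antitone fun p => FW p i₂)
    (hVbdd : ∃ N, ∀ p ≤ N, FV p i₁ = ⊤) (hWbdd : ∃ N, ∀ p ≤ N, FW p i₂ = ⊤)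
    (hVhaus : ⨅ p, FV p i₁ = ⊥) (hWhaus : ⨅ p, FW p i₂ = ⊥)
    (hVcomp : SeqComplete fun p => FV p i₂) (hWcomp : SeqComplete fun p => FW p i₃)
    {c : V i₁ × W i₂} (hc : coneDiff dV dW f i₀ i₁ i₂ h₀ h₁ c = 0) :
    c ∈ LinearMap.range (coneDiff dV dW f i₁ i₂ i₃ h₁ h₂) := by
  obtain ⟨N₁, hN₁⟩ := hVbdd
  obtain ⟨N₂, hN₂⟩ := hWbdd
  refine mem_range_of_forall_exists_sub_mem _ (FM := fun p => (FV p i₂).prod (FW p i₃))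
    (FN := fun p => (FV p i₁).prod (FW p i₂))
    (fun p q hpq => Submodule.prod_mono (hV₁ hpq) (hW₂ hpq)) ?_ (hVcomp.prod hWcomp)
    (iInf_prod_eq_bot hVhaus hWhaus)
    (LinearMap.range_le_ker_iff.2 (coneDiff_comp_coneDiff hdV hdW hchain h₀ h₁ h₂))
    ?_ hc (p₀ := min N₁ N₂) ?_
  · rintro p ⟨x, y⟩ ⟨hx, hy⟩
    exact ⟨neg_mem (hFVd _ _ _ _ _ hx), add_mem (hcompatf _ _ _ hx) (hFWd _ _ _ _ _ hy)⟩
  · intro p z hz hzp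
    refine exists_sub_coneDiff_mem hchain hcompatf hgr_surj hgr_inj h₀ h₁ h₂ p hzp ?_
    rw [LinearMap.mem_ker.1 hz]
    exact zero_mem _
  · rw [hN₁ _ (min_le_left _ _), hN₂ _ (min_le_right _ _), Submodule.prod_top]
    trivial

end Cone

/-- Let `f : V → W` be a map of chain complexes equipped with
decreasing filtrations `F^p` by subcomplexes, compatible with `f`
(`f (F^p V) ⊆ F^p W`), both filtrations being exhaustive, bounded above
(`F^p = ⊤` for `p` small) and complete (sequentially complete).  If the
induced map `gr f : gr V → gr W` on associated graded complexes is a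
quasi-isomorphism (expressed elementwise: `gr`-cycles of `W` are hit up to
`gr`-boundaries, and `gr`-cycles of `V` mapping to `gr`-boundaries are
`gr`-boundaries), then `f` is a quasi-isomorphism. -/
theorem stmt5 (R : Type*) [CommRing R]
    (V W : ℤ → Type*)
    [∀ i, AddCommGroup (V i)] [∀ i, Module R (V i)]
    [∀ i, AddCommGroup (W i)] [∀ i, Module R (W i)]
    (dV : ∀ (i j : ℤ), j = i - 1 → (V i →ₗ[R] V j))
    (dW : ∀ (i j : ℤ), j = i - 1 → (W i →ₗ[R] W j))
    (hdV : ∀ (i j : ℤ) (h : j = i - 1) (l : ℤ) (h' : l = j - 1) (x : V i),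
      dV j l h' (dV i j h x) = 0)
    (hdW : ∀ (i j : ℤ) (h : j = i - 1) (l : ℤ) (h' : l = j - 1) (x : W i),
      dW j l h' (dW i j h x) = 0)
    (f : ∀ i, V i →ₗ[R] W i)
    (hchain : ∀ (i j : ℤ) (h : j = i - 1) (x : V i),
      dW i j h (f i x) = f j (dV i j h x))
    (FV : ℤ → ∀ i, Submodule R (V i)) (FW : ℤ → ∀ i, Submodule R (W i))
    (hFVmono : ∀ p i, FV (p + 1) i ≤ FV p i)
    (hFWmono : ∀ p i, FW (p + 1) i ≤ FW p i)
    (hFVd : ∀ (p i j : ℤ) (h : j = i - 1), ∀ x ∈ FV p i, dV i j h x ∈ FV p j)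
    (hFWd : ∀ (p i j : ℤ) (h : j = i - 1), ∀ x ∈ FW p i, dW i j h x ∈ FW p j)
    (hcompatf : ∀ (p i : ℤ), ∀ x ∈ FV p i, f i x ∈ FW p i)
    -- bounded above (hence exhaustive)
    (hVbdd : ∀ i, ∃ N : ℤ, ∀ p ≤ N, FV p i = ⊤)
    (hWbdd : ∀ i, ∃ N : ℤ, ∀ p ≤ N, FW p i = ⊤)
    -- complete: Hausdorff and sequentially complete
    (hVhaus : ∀ i, (⨅ p : ℤ, FV p i) = ⊥)
    (hWhaus : ∀ i, (⨅ p : ℤ, FW p i) = ⊥)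
    (hVcomp : ∀ i (c : ℤ → V i), (∀ p, c (p + 1) - c p ∈ FV p i) →
      ∃ x : V i, ∀ p, x - c p ∈ FV p i)
    (hWcomp : ∀ i (c : ℤ → W i), (∀ p, c (p + 1) - c p ∈ FW p i) →
      ∃ x : W i, ∀ p, x - c p ∈ FW p i)
    -- gr f is a quasi-isomorphism:
    (hgr_surj : ∀ (p i : ℤ), ∀ y ∈ FW p i,
      dW i (i - 1) rfl y ∈ FW (p + 1) (i - 1) →
      ∃ x ∈ FV p i, dV i (i - 1) rfl x ∈ FV (p + 1) (i - 1) ∧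
        ∃ z ∈ FW p (i + 1), f i x - y - dW (i + 1) i (by omega) z ∈ FW (p + 1) i)
    (hgr_inj : ∀ (p i : ℤ), ∀ x ∈ FV p i,
      dV i (i - 1) rfl x ∈ FV (p + 1) (i - 1) →
      (∃ z ∈ FW p (i + 1), f i x - dW (i + 1) i (by omega) z ∈ FW (p + 1) i) →
      ∃ u ∈ FV p (i + 1), x - dV (i + 1) i (by omega) u ∈ FV (p + 1) i) :
    -- then f is a quasi-isomorphism:
    (∀ (i : ℤ) (y : W i), dW i (i - 1) rfl y = 0 →
      ∃ x : V i, dV i (i - 1) rfl x = 0 ∧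
        ∃ z : W (i + 1), f i x - y = dW (i + 1) i (by omega) z) ∧
    (∀ (i : ℤ) (x : V i), dV i (i - 1) rfl x = 0 →
      (∃ z : W (i + 1), f i x = dW (i + 1) i (by omega) z) →
      ∃ u : V (i + 1), x = dV (i + 1) i (by omega) u) := by
  have acyclic : ∀ {i₀ i₁ i₂ i₃ : ℤ} (h₀ : i₀ = i₁ - 1) (h₁ : i₁ = i₂ - 1) (h₂ : i₂ = i₃ - 1)
      (c : V i₁ × W i₂), coneDiff dV dW f i₀ i₁ i₂ h₀ h₁ c = 0 →
        c ∈ LinearMap.range (coneDiff dV dW f i₁ i₂ i₃ h₁ h₂) := fun h₀ h₁ h₂ _ hc =>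
    mem_range_coneDiff_of_coneDiff_eq_zero hdV hdW hchain hFVd hFWd hcompatf hgr_surj hgr_inj
      h₀ h₁ h₂ (antitone_int_of_succ_le fun p => hFVmono p _)
      (antitone_int_of_succ_le fun p => hFWmono p _) (hVbdd _) (hWbdd _) (hVhaus _)
      (hWhaus _) (hVcomp _) (hWcomp _) hc
  refine ⟨fun i y hy => ?_, fun i x hx ⟨z, hz⟩ => ?_⟩
  · obtain ⟨⟨a, b⟩, hab⟩ := acyclic (i₀ := i - 1 - 1) rfl rfl (i₃ := i + 1) (by omega)
      (0, y) (by simp [hy])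
    simp only [coneDiff_apply, Prod.ext_iff] at hab
    exact ⟨a, neg_eq_zero.1 hab.1, -b, by rw [map_neg, ← hab.2]; abel⟩
  · obtain ⟨⟨a, b⟩, hab⟩ := acyclic (i₀ := i - 1) rfl (by omega) (i₃ := i + 2) (by omega)
      (x, -z) (by simp [hx, hz])
    simp only [coneDiff_apply, Prod.ext_iff] at hab
    exact ⟨-a, by rw [map_neg, hab.1]⟩
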